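/- For every d ≥ 1 and n ≥ 1, the space of elementary differentials decomposes as a direct sum indexed by multi-indices: W_d(n) = ⊕_{m ∈ MI(n)} W_d(n)[m], where W_d(n)[m] is the real span of {F(τ) : τ ∈ RT(n), π(τ) = m}. That is, the subspaces W_d(n)[m] together span W_d(n), and whenever w_m ∈ W_d(n)[m] for each m ∈ MI(n) satisfy Σ_m w_m = 0, then w_m = 0 for every m. (This decomposition underlies the existence of a faithful 1-weak combinatorial description of W_d compatible with the unlabelled multi-indices.) -/

import Mathlib

open Finset

/-- The type of smooth maps from `ℝ^d` to `ℝ^d` (i.e. `C_d = C^∞(ℝ^d, ℝ^d)`). -/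
def SmoothMapD (d : ℕ) : Type :=
  {f : (Fin d → ℝ) → (Fin d → ℝ) // ∀ k : ℕ, ContDiff ℝ k f}

/-- A rooted tree on a finite vertex set `V`: a set `E` of (parent, child) edges together with a
root, such that every non-root vertex has a unique parent, the root has no parent, and every
vertex reaches the root by iteratively passing to its parent. -/
structure RTree (V : Type) [Fintype V] [DecidableEq V] where
  E : Finset (V × V)
  root : V
  parent_unique : ∀ v : V, v ≠ root → ∃! u : V, (u, v) ∈ E
  root_no_parent : ∀ u : V, (u, root) ∉ E
  reaches_root : ∀ v : V, Relation.ReflTransGen (fun a b : V => (b, a) ∈ E) v root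

/-- The children of a vertex `v` of a rooted tree: `C_v = {w | (v, w) ∈ E}`. -/
def RTree.children {V : Type} [Fintype V] [DecidableEq V] (τ : RTree V) (v : V) :
    Finset V :=
  Finset.univ.filter (fun w => (v, w) ∈ τ.E)

/-- Partial derivative `∂_i` of a scalar function on `ℝ^d`. -/
noncomputable def pd {d : ℕ} (i : Fin d) (g : (Fin d → ℝ) → ℝ) : (Fin d → ℝ) → ℝ :=
  fun x => fderiv ℝ g x (Pi.single i 1)

/-- Iterated partial derivatives along a list of directions. -/
noncomputable def pdList {d : ℕ} (l : List (Fin d)) (g : (Fin d → ℝ) → ℝ) : (Fin d → ℝ) → ℝ :=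
  l.foldr pd g

/-- The elementary differential of a rooted tree, in closed form: the `j`-th component of
`F(τ)((f^v)_v)(x)` is the sum over all choices of an index `idx v ∈ [d]` for each vertex `v`,
subject to `idx root = j`, of the product over all vertices `v` of
`∂_{idx c₁} ⋯ ∂_{idx c_k} (f^v)_{idx v} (x)` where `c₁, …, c_k` are the children of `v`.
For smooth inputs this agrees with the usual recursive definition. -/
noncomputable def elemDiff {V : Type} [Fintype V] [DecidableEq V] {d : ℕ} (τ : RTree V)
    (f : V → ((Fin d → ℝ) → (Fin d → ℝ))) : (Fin d → ℝ) → (Fin d → ℝ) :=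
  fun x j =>
    ∑ idx : V → Fin d,
      if idx τ.root = j then
        ∏ v : V, pdList ((τ.children v).toList.map idx) (fun y => f v y (idx v)) x
      else 0

/-- The elementary differential `F(τ)` evaluated on smooth maps. -/
noncomputable def Fel (d : ℕ) {V : Type} [Fintype V] [DecidableEq V] (τ : RTree V)
    (f : V → SmoothMapD d) : (Fin d → ℝ) → (Fin d → ℝ) :=
  elemDiff τ (fun v => (f v).1)
/-- `W_d(n)`: the span of the elementary differentials of rooted trees on `n` vertices, inside
the space of functionals `(C_d)^n → C_d`. -/
noncomputable def Wspace (d n : ℕ) :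
    Submodule ℝ ((Fin n → SmoothMapD d) → (Fin d → ℝ) → (Fin d → ℝ)) :=
  Submodule.span ℝ (Set.range (fun τ : RTree (Fin n) => Fel d τ))
/-- The type of smooth functions `ℝ → ℝ` (i.e. `C_1 = C^∞(ℝ, ℝ)`). -/
def SmoothR : Type := {f : ℝ → ℝ // ∀ k : ℕ, ContDiff ℝ k f}

/-- A multi-index on `[n]`: a map `φ : [n] → ℕ` with `∑ v, φ v = n - 1`. -/
structure MultiIndex (n : ℕ) where
  φ : Fin n → ℕ
  sum_eq : ∑ v, φ v = n - 1

/-- The elementary differential `G(m)(f₁, …, fₙ) = f₁^{(φ 1)} ⋯ fₙ^{(φ n)}` of a multi-index. -/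
noncomputable def Gmap {n : ℕ} (m : MultiIndex n) (f : Fin n → SmoothR) : ℝ → ℝ :=
  fun t => ∏ v, iteratedDeriv (m.φ v) ((f v).1) t

/-!
Precompose every input `f^v` with the affine map `y ↦ λ_v • y + x` and evaluate at `0`. By the
chain rule each partial derivative at `v` contributes a factor `λ_v`, so the elementary
differential `F(τ)` gets multiplied by the monomial `∏_v λ_v ^ (#children of v)`: the functionals
in `W_d(n)[m]` are homogeneous of multidegree `m` for this action. Monomials of distinct
multidegrees are linearly independent functions of `λ` (a polynomial vanishing on `ℝ^n` is zero),
which separates the components. They span `W_d(n)` because the children counts of a tree sum to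
its number of edges, `n - 1`.
-/

open scoped ContDiff

section PartialDerivatives

variable {d : ℕ}

theorem contDiff_pd (i : Fin d) {g : (Fin d → ℝ) → ℝ} (hg : ContDiff ℝ ∞ g) :
    ContDiff ℝ ∞ (pd i g) :=
  (hg.fderiv_right le_rfl).clm_apply contDiff_const

theorem contDiff_pdList (l : List (Fin d)) {g : (Fin d → ℝ) → ℝ} (hg : ContDiff ℝ ∞ g) :
    ContDiff ℝ ∞ (pdList l g) := by
  induction l with
  | nil => exact hg
  | cons i l ih => exact contDiff_pd i ih

theorem pd_const_mul (i : Fin d) (a : ℝ) {g : (Fin d → ℝ) → ℝ} (hg : Differentiable ℝ g)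
    (z : Fin d → ℝ) : pd i (fun y => a * g y) z = a * pd i g z := by
  simp [pd, fderiv_const_mul (hg z)]

theorem pd_comp_smul_add (i : Fin d) {g : (Fin d → ℝ) → ℝ} (hg : Differentiable ℝ g)
    (c : ℝ) (x z : Fin d → ℝ) :
    pd i (fun y => g (c • y + x)) z = c * pd i g (c • z + x) := by
  have hA : HasFDerivAt (fun y : Fin d → ℝ => c • y + x) (c • ContinuousLinearMap.id ℝ _) z :=
    ((hasFDerivAt_id z).const_smul c).add_const x
  have hcomp : HasFDerivAt (fun y => g (c • y + x)) _ z := (hg _).hasFDerivAt.comp z hA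
  simp [pd, hcomp.fderiv]

theorem pdList_comp_smul_add (l : List (Fin d)) {g : (Fin d → ℝ) → ℝ} (hg : ContDiff ℝ ∞ g)
    (c : ℝ) (x z : Fin d → ℝ) :
    pdList l (fun y => g (c • y + x)) z = c ^ l.length * pdList l g (c • z + x) := by
  induction l generalizing z with
  | nil => simp [pdList]
  | cons i l ih =>
    have hl := contDiff_pdList l hg
    have hdiff : Differentiable ℝ (fun z' => pdList l g (c • z' + x)) :=
      (hl.differentiable (by simp)).comp ((differentiable_id.const_smul c).add_const x)
    change pd i (pdList l fun y => g (c • y + x)) z = _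
    rw [funext ih, pd_const_mul i _ hdiff, pd_comp_smul_add i (hl.differentiable (by simp))]
    simp only [pdList, List.foldr_cons, List.length_cons]
    ring

end PartialDerivatives

theorem linearIndependent_prod_pow {K σ : Type*} [Field K] [Infinite K] [Fintype σ] :
    LinearIndependent K (fun (a : σ → ℕ) (x : σ → K) => ∏ v, x v ^ a v) := by
  let evalMap : MvPolynomial σ K →ₗ[K] (σ → K) → K :=
    LinearMap.pi fun x => (MvPolynomial.aeval x).toLinearMap
  have hinj : LinearMap.ker evalMap = ⊥ :=
    LinearMap.ker_eq_bot.2 fun p q hpq => MvPolynomial.funext fun x => congrFun hpq x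
  have h := ((MvPolynomial.basisMonomials σ K).linearIndependent.map' evalMap hinj).comp
    Finsupp.equivFunOnFinite.symm Finsupp.equivFunOnFinite.symm.injective
  convert h using 2 with a
  · ext x
    simp [evalMap, MvPolynomial.aeval_monomial, Finsupp.prod_fintype]
  all_goals rfl

namespace SmoothMapD

variable {d : ℕ}

theorem contDiff (f : SmoothMapD d) : ContDiff ℝ ∞ f.1 :=
  contDiff_infty.2 f.2

def rescale (c : ℝ) (x : Fin d → ℝ) (f : SmoothMapD d) : SmoothMapD d :=
  ⟨fun y => f.1 (c • y + x), fun k => (f.2 k).comp ((contDiff_id.const_smul c).add contDiff_const)⟩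

end SmoothMapD

section Homogeneity

variable (d : ℕ) {V : Type} [Fintype V]

/-- Functionals of multidegree `φ` for the action `f^v ↦ f^v (λ_v • · + x)` followed by
evaluation at `0`. -/
def homogeneousFunctionals (φ : V → ℕ) :
    Submodule ℝ ((V → SmoothMapD d) → (Fin d → ℝ) → (Fin d → ℝ)) where
  carrier := {u | ∀ (f : V → SmoothMapD d) (lam : V → ℝ) x,
    u (fun v => (f v).rescale (lam v) x) 0 = (∏ v, lam v ^ φ v) • u f x}
  add_mem' hu hv f lam x := by simp [hu f lam x, hv f lam x]
  zero_mem' _ _ _ := by simp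
  smul_mem' a u hu f lam x := by simp [hu f lam x, smul_comm a]

variable {d}

theorem eq_zero_of_sum_eq_zero_of_mem_homogeneousFunctionals {ι : Type*} {φ : ι → V → ℕ}
    (hφ : Function.Injective φ) {s : Finset ι}
    {w : ι → (V → SmoothMapD d) → (Fin d → ℝ) → (Fin d → ℝ)}
    (hw : ∀ i ∈ s, w i ∈ homogeneousFunctionals d (φ i)) (hsum : ∑ i ∈ s, w i = 0) :
    ∀ i ∈ s, w i = 0 := by
  intro i hi
  funext f x j
  have hmonomials := (linearIndependent_prod_pow (K := ℝ) (σ := V)).comp φ hφ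
  refine linearIndependent_iff'.1 hmonomials s (fun i => w i f x j) ?_ i hi
  funext lam
  simp only [Finset.sum_apply, Pi.smul_apply, Function.comp_apply, smul_eq_mul, Pi.zero_apply]
  calc ∑ i ∈ s, w i f x j * ∏ v, lam v ^ φ i v
      = ∑ i ∈ s, w i (fun v => (f v).rescale (lam v) x) 0 j :=
        Finset.sum_congr rfl fun i hi => by simp [hw i hi f lam x, mul_comm]
    _ = (∑ i ∈ s, w i) (fun v => (f v).rescale (lam v) x) 0 j := by simp only [Finset.sum_apply]
    _ = 0 := by rw [hsum]; rfl

end Homogeneity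

theorem Fel_mem_homogeneousFunctionals {d : ℕ} {V : Type} [Fintype V] [DecidableEq V]
    (τ : RTree V) : Fel d τ ∈ homogeneousFunctionals d fun v => (τ.children v).card := by
  intro f lam x
  have hvertex : ∀ (idx : V → Fin d) (v : V),
      pdList ((τ.children v).toList.map idx) (fun y => ((f v).rescale (lam v) x).1 y (idx v)) 0
        = lam v ^ (τ.children v).card *
          pdList ((τ.children v).toList.map idx) (fun y => (f v).1 y (idx v)) x := by
    intro idx v
    simpa [SmoothMapD.rescale] using pdList_comp_smul_add ((τ.children v).toList.map idx)
      (contDiff_pi.1 (f v).contDiff (idx v)) (lam v) x 0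
  ext j
  simp only [Fel, elemDiff, hvertex, Finset.prod_mul_distrib, Pi.smul_apply, smul_eq_mul,
    Finset.mul_sum, mul_ite, mul_zero]

namespace RTree

variable {V : Type} [Fintype V] [DecidableEq V] (τ : RTree V)

theorem card_children (v : V) : (τ.children v).card = (τ.E.filter (·.1 = v)).card :=
  Finset.card_nbij' (v, ·) Prod.snd (fun w hw => by simpa [children] using hw)
    (fun p hp => by obtain ⟨hp, rfl⟩ := Finset.mem_filter.1 hp; simpa [children] using hp)
    (fun _ _ => rfl) (fun p hp => by obtain ⟨-, rfl⟩ := Finset.mem_filter.1 hp; rfl)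

theorem card_E : τ.E.card = Fintype.card V - 1 := by
  rw [← Finset.card_univ, ← Finset.card_erase_of_mem (Finset.mem_univ τ.root)]
  refine Finset.card_nbij Prod.snd ?_ ?_ ?_
  · rintro ⟨u, v⟩ huv
    exact Finset.mem_erase.2 ⟨fun h => τ.root_no_parent u (h ▸ huv), Finset.mem_univ _⟩
  · rintro ⟨u, v⟩ huv ⟨u', v'⟩ huv' (rfl : v = v')
    obtain ⟨_, -, hp⟩ := τ.parent_unique v fun h => τ.root_no_parent u (h ▸ huv)
    rw [hp u huv, hp u' huv']
  · intro v hv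
    obtain ⟨u, hu, -⟩ := τ.parent_unique v (Finset.mem_erase.1 hv).1
    exact ⟨(u, v), hu, rfl⟩

theorem sum_card_children : ∑ v, (τ.children v).card = Fintype.card V - 1 := by
  simp only [card_children, ← τ.card_E]
  exact (Finset.card_eq_sum_card_fiberwise fun _ _ => Finset.mem_univ _).symm

end RTree

theorem MultiIndex.φ_injective {n : ℕ} : Function.Injective (MultiIndex.φ (n := n)) := by
  rintro ⟨φ, _⟩ ⟨ψ, _⟩ (rfl : φ = ψ)
  rfl

def RTree.multiIndex {n : ℕ} (τ : RTree (Fin n)) : MultiIndex n :=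
  ⟨fun v => (τ.children v).card, by simpa using τ.sum_card_children⟩

section Components

variable (d : ℕ) {n : ℕ}

/-- The paper's `W_d(n)[m]`. -/
def Wcomponent (m : MultiIndex n) :
    Submodule ℝ ((Fin n → SmoothMapD d) → (Fin d → ℝ) → (Fin d → ℝ)) :=
  Submodule.span ℝ {w | ∃ τ : RTree (Fin n), (∀ v, (τ.children v).card = m.φ v) ∧ Fel d τ = w}

theorem Fel_mem_Wcomponent (τ : RTree (Fin n)) : Fel d τ ∈ Wcomponent d τ.multiIndex :=
  Submodule.subset_span ⟨τ, fun _ => rfl, rfl⟩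

theorem iSup_Wcomponent_eq_Wspace : ⨆ m : MultiIndex n, Wcomponent d m = Wspace d n := by
  refine le_antisymm (iSup_le fun m => Submodule.span_mono ?_) (Submodule.span_le.2 ?_)
  · rintro _ ⟨τ, -, rfl⟩
    exact ⟨τ, rfl⟩
  · rintro _ ⟨τ, rfl⟩
    exact Submodule.mem_iSup_of_mem τ.multiIndex (Fel_mem_Wcomponent d τ)

theorem Wcomponent_le_homogeneousFunctionals (m : MultiIndex n) :
    Wcomponent d m ≤ homogeneousFunctionals d m.φ := by
  refine Submodule.span_le.2 ?_
  rintro _ ⟨τ, hτ, rfl⟩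
  rw [SetLike.mem_coe, ← funext hτ]
  exact Fel_mem_homogeneousFunctionals τ

end Components

theorem Wspace_direct_sum_over_multiindices_general (d n : ℕ) :
    (⨆ m : MultiIndex n, Submodule.span ℝ
        {w | ∃ τ : RTree (Fin n), (∀ v, (τ.children v).card = m.φ v) ∧ Fel d τ = w})
      = Wspace d n ∧
    ∀ (s : Finset (MultiIndex n))
      (w : MultiIndex n → ((Fin n → SmoothMapD d) → (Fin d → ℝ) → (Fin d → ℝ))),
      (∀ m ∈ s, w m ∈ Submodule.span ℝ
        {u | ∃ τ : RTree (Fin n), (∀ v, (τ.children v).card = m.φ v) ∧ Fel d τ = u}) →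
      ∑ m ∈ s, w m = 0 → ∀ m ∈ s, w m = 0 :=
  ⟨iSup_Wcomponent_eq_Wspace d, fun _ _ hw hsum =>
    eq_zero_of_sum_eq_zero_of_mem_homogeneousFunctionals MultiIndex.φ_injective
      (fun m hm => Wcomponent_le_homogeneousFunctionals d m (hw m hm)) hsum⟩

/-- Theorem 6.6 (key decomposition): `W_d(n)` is the direct sum, over the multi-indices
`m ∈ MI(n)`, of the subspaces `W_d(n)[m]` spanned by the elementary differentials of the
rooted trees with multi-index `m`: these subspaces span `W_d(n)`, and they are independent. -/
theorem Wspace_direct_sum_over_multiindices (d n : ℕ) (hd : 1 ≤ d) (hn : 1 ≤ n) :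
    (⨆ m : MultiIndex n, Submodule.span ℝ
        {w | ∃ τ : RTree (Fin n), (∀ v, (τ.children v).card = m.φ v) ∧ Fel d τ = w})
      = Wspace d n ∧
    ∀ (s : Finset (MultiIndex n))
      (w : MultiIndex n → ((Fin n → SmoothMapD d) → (Fin d → ℝ) → (Fin d → ℝ))),
      (∀ m ∈ s, w m ∈ Submodule.span ℝ
        {u | ∃ τ : RTree (Fin n), (∀ v, (τ.children v).card = m.φ v) ∧ Fel d τ = u}) →
      ∑ m ∈ s, w m = 0 → ∀ m ∈ s, w m = 0 :=
  Wspace_direct_sum_over_multiindices_general d n
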